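/- arXiv:math/9910132 — 3 statements merged into one kernel-verified Lean document; each statement's English description precedes it below -/
import Mathlib

section
/- Let K be a field, let n be a positive integer, and let G be a subset of the matrix algebra M_n(K). Then the unital K-subalgebra of M_n(K) generated by G is equal to the K-linear span of the set of all products a_1 a_2 ⋯ a_i with a_1, …, a_i ∈ G and 0 ≤ i < n², where the empty product (i = 0) is the identity matrix. -/
/-!
The spans `W i` of the products of fewer than `i` generators form an increasing chain
`⊥ = W 0 ≤ W 1 ≤ ⋯` whose union is the generated subalgebra. Since `W (j + 1) ⊆ W 1 + G • W j`,
the chain is constant from the first index where it stalls, and in an algebra of dimension `d`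
it stalls at some index `≤ d`, so `W d` is already the whole subalgebra. For `M_n(K)`, `d = n²`.
-/

namespace Submodule

variable {K V : Type*} [DivisionRing K] [AddCommGroup V] [Module K V] [FiniteDimensional K V]

lemma le_finrank_of_forall_lt_succ {f : ℕ → Submodule K V} {m : ℕ}
    (hf : ∀ j < m, f j < f (j + 1)) : m ≤ Module.finrank K (f m) := by
  induction m with
  | zero => exact Nat.zero_le _
  | succ m ih =>
    have hm := ih fun j hj => hf j (hj.trans m.lt_succ_self)
    have hlt := finrank_lt_finrank_of_lt (hf m m.lt_succ_self)
    omega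

lemma exists_le_finrank_eq_succ {f : ℕ → Submodule K V} (hf : Monotone f) :
    ∃ j ≤ Module.finrank K V, f j = f (j + 1) := by
  by_contra! h
  have hstrict : ∀ j < Module.finrank K V + 1, f j < f (j + 1) := fun j hj =>
    (hf j.le_succ).lt_of_ne (h j (Nat.lt_succ_iff.mp hj))
  have := le_finrank_of_forall_lt_succ hstrict
  have := finrank_le (f (Module.finrank K V + 1))
  omega

end Submodule

section WordSpan

variable (K : Type*) {A : Type*} [CommSemiring K] [Semiring A] [Algebra K A]

def prodsOfLengthLT (G : Set A) (i : ℕ) : Set A :=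
  {M | ∃ l : List A, l.length < i ∧ (∀ a ∈ l, a ∈ G) ∧ M = l.prod}

def wordSpan (G : Set A) (i : ℕ) : Submodule K A :=
  Submodule.span K (prodsOfLengthLT G i)

variable {K} {G : Set A}

lemma wordSpan_mono : Monotone (wordSpan K G) := fun _ _ hij =>
  Submodule.span_mono fun _ ⟨l, hl, hG, hM⟩ => ⟨l, hl.trans_le hij, hG, hM⟩

lemma list_prod_mem_wordSpan {l : List A} (hG : ∀ a ∈ l, a ∈ G) :
    l.prod ∈ wordSpan K G (l.length + 1) :=
  Submodule.subset_span ⟨l, l.length.lt_succ_self, hG, rfl⟩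

lemma mul_mem_wordSpan_succ {a x : A} (ha : a ∈ G) {i : ℕ} (hx : x ∈ wordSpan K G i) :
    a * x ∈ wordSpan K G (i + 1) := by
  induction hx using Submodule.span_induction with
  | mem y hy =>
    obtain ⟨l, hl, hG, rfl⟩ := hy
    exact Submodule.subset_span ⟨a :: l, Nat.succ_lt_succ hl,
      List.forall_mem_cons.mpr ⟨ha, hG⟩, List.prod_cons.symm⟩
  | zero => simpa only [mul_zero] using zero_mem _
  | add x y _ _ hx hy => simpa only [mul_add] using add_mem hx hy
  | smul c x _ hx => simpa only [mul_smul_comm] using Submodule.smul_mem _ c hx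

lemma wordSpan_le_of_succ_le {i : ℕ} (h : wordSpan K G (i + 1) ≤ wordSpan K G i) (j : ℕ) :
    wordSpan K G j ≤ wordSpan K G i := by
  induction j with
  | zero => exact wordSpan_mono (Nat.zero_le i)
  | succ j ih =>
    refine Submodule.span_le.mpr ?_
    rintro _ ⟨l, hl, hG, rfl⟩
    cases l with
    | nil =>
      exact h (wordSpan_mono (Nat.le_add_left 1 i) (list_prod_mem_wordSpan (l := []) (by simp)))
    | cons a t =>
      have ht : t.prod ∈ wordSpan K G i :=
        ih (Submodule.subset_span ⟨t, by simpa using hl, fun b hb => hG b (.tail a hb), rfl⟩)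
      rw [SetLike.mem_coe, List.prod_cons]
      exact h (mul_mem_wordSpan_succ (hG a (.head t)) ht)

end WordSpan

section FiniteDimensional

variable {K A : Type*} [Field K] [Ring A] [Algebra K A] [FiniteDimensional K A]

lemma wordSpan_le_wordSpan_finrank {G : Set A} (j : ℕ) :
    wordSpan K G j ≤ wordSpan K G (Module.finrank K A) := by
  obtain ⟨i, hi, hstall⟩ := Submodule.exists_le_finrank_eq_succ (wordSpan_mono (K := K) (G := G))
  exact (wordSpan_le_of_succ_le hstall.ge j).trans (wordSpan_mono hi)

theorem toSubmodule_adjoin_eq_wordSpan_finrank (G : Set A) :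
    Subalgebra.toSubmodule (Algebra.adjoin K G) = wordSpan K G (Module.finrank K A) := by
  refine le_antisymm ?_ (Submodule.span_le.mpr ?_)
  · rw [Algebra.adjoin_eq_span, Submodule.span_le]
    intro x hx
    obtain ⟨l, hG, rfl⟩ := Submonoid.exists_list_of_mem_closure hx
    exact wordSpan_le_wordSpan_finrank _ (list_prod_mem_wordSpan hG)
  · rintro _ ⟨l, -, hG, rfl⟩
    exact Subalgebra.list_prod_mem _ fun a ha => Algebra.subset_adjoin (hG a ha)

end FiniteDimensional

theorem stmt0_general {K : Type*} [Field K] (n : ℕ)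
    (G : Set (Matrix (Fin n) (Fin n) K)) :
    Subalgebra.toSubmodule (Algebra.adjoin K G) =
      Submodule.span K {M : Matrix (Fin n) (Fin n) K |
        ∃ l : List (Matrix (Fin n) (Fin n) K),
          l.length < n ^ 2 ∧ (∀ a ∈ l, a ∈ G) ∧ M = l.prod} := by
  rw [toSubmodule_adjoin_eq_wordSpan_finrank, Module.finrank_matrix, Module.finrank_self,
    Fintype.card_fin, mul_one, ← sq]
  rfl

/-- For a field `K`, `n > 0`, and a subset `G` of `M_n(K)`, the unital
`K`-subalgebra generated by `G` equals the `K`-linear span of all products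
`a_1 ⋯ a_i` with `a_1, …, a_i ∈ G` and `0 ≤ i < n²` (empty product = identity). -/
theorem stmt0 {K : Type*} [Field K] (n : ℕ) (hn : 0 < n)
    (G : Set (Matrix (Fin n) (Fin n) K)) :
    Subalgebra.toSubmodule (Algebra.adjoin K G) =
      Submodule.span K {M : Matrix (Fin n) (Fin n) K |
        ∃ l : List (Matrix (Fin n) (Fin n) K),
          l.length < n ^ 2 ∧ (∀ a ∈ l, a ∈ G) ∧ M = l.prod} :=
  stmt0_general n G
end

section
/- Let K be a field and let n ≥ 2. Then there exist matrices b, a_1, …, a_{2(n-1)} ∈ M_n(K) such that the trace of b · s_{2(n-1)}(a_1, …, a_{2(n-1)}) is nonzero. -/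
/-!
Take the staircase of matrix units `e₁₁, e₁₂, e₂₂, e₂₃, …, e_{n-1,n-1}, e_{n-1,n}`. A product of
matrix units is nonzero only if the column index of each factor equals the row index of the next;
for a rearrangement of the staircase this forces the order to be nondecreasing, so only the
identity permutation contributes to the standard polynomial, which therefore equals `e₁ₙ`.
With `b = eₙ₁` the trace is `1`.
-/

open Finset in
/-- The `m`-th standard polynomial `s_m(a_1, …, a_m) = Σ_{σ ∈ S_m} sgn(σ) a_{σ(1)} ⋯ a_{σ(m)}`. -/
def stdPoly {A : Type*} [Ring A] (m : ℕ) (a : Fin m → A) : A :=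
  ∑ σ : Equiv.Perm (Fin m), (Equiv.Perm.sign σ : ℤ) • (List.ofFn fun i => a (σ i)).prod

open Matrix

theorem Matrix.list_prod_map_single_one {ι R : Type*} [DecidableEq ι] [Fintype ι] [Semiring R]
    (l : List (ι × ι)) (hl : l ≠ []) :
    (l.map fun p => single p.1 p.2 (1 : R)).prod =
      if l.IsChain (fun p q => p.2 = q.1) then single (l.head hl).1 (l.getLast hl).2 1 else 0 := by
  induction l with
  | nil => exact absurd rfl hl
  | cons p t ih =>
    cases t with
    | nil => simp
    | cons q t =>
      rw [List.map_cons, List.prod_cons, ih (List.cons_ne_nil _ _)]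
      by_cases hpq : p.2 = q.1
      · simp only [List.isChain_cons_cons, hpq, true_and]
        split_ifs <;> simp
      · simp [hpq]

theorem Matrix.list_prod_ofFn_single_one {ι R : Type*} [DecidableEq ι] [Fintype ι] [Semiring R]
    {m : ℕ} (f : Fin m → ι × ι) (hm : 0 < m) :
    (List.ofFn fun i => single (f i).1 (f i).2 (1 : R)).prod =
      if (List.ofFn f).IsChain (fun p q => p.2 = q.1) then
        single (f ⟨0, hm⟩).1 (f ⟨m - 1, by omega⟩).2 1
      else 0 := by
  have hne : List.ofFn f ≠ [] := by simpa using hm.ne'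
  rw [← List.head_ofFn hne, ← List.getLast_ofFn hne, ← list_prod_map_single_one _ hne, List.map_ofFn]
  rfl

theorem Equiv.Perm.eq_one_of_monotone {α : Type*} [LinearOrder α] [Finite α] {σ : Equiv.Perm α}
    (h : Monotone σ) : σ = 1 :=
  Equiv.ext fun _ => (h.strictMono_of_injective σ.injective).apply_eq

def staircase (n : ℕ) (i : Fin (2 * (n - 1))) : Fin n × Fin n :=
  (⟨i / 2, by omega⟩, ⟨(i + 1) / 2, by omega⟩)

theorem le_of_staircase_snd_eq_fst {n : ℕ} {i j : Fin (2 * (n - 1))}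
    (h : (staircase n i).2 = (staircase n j).1) : i ≤ j := by
  simp only [staircase, Fin.ext_iff] at h
  omega

theorem isChain_ofFn_staircase (n : ℕ) :
    (List.ofFn (staircase n)).IsChain (fun p q => p.2 = q.1) :=
  List.isChain_ofFn.2 fun _ _ => rfl

theorem eq_one_of_isChain_ofFn_staircase_comp {n : ℕ} {σ : Equiv.Perm (Fin (2 * (n - 1)))}
    (h : (List.ofFn (staircase n ∘ σ)).IsChain (fun p q => p.2 = q.1)) : σ = 1 := by
  rw [← List.map_ofFn, List.isChain_map] at h
  exact Equiv.Perm.eq_one_of_monotone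
    (h.imp fun _ _ => le_of_staircase_snd_eq_fst).sortedLE.monotone

theorem stdPoly_single_staircase {R : Type*} [Ring R] (n : ℕ) (hn : 2 ≤ n) :
    stdPoly (2 * (n - 1)) (fun i => single (staircase n i).1 (staircase n i).2 (1 : R)) =
      single ⟨0, by omega⟩ ⟨n - 1, by omega⟩ 1 := by
  have hm : 0 < 2 * (n - 1) := by omega
  rw [stdPoly, Finset.sum_eq_single 1]
  · rw [Equiv.Perm.sign_one, Units.val_one, one_smul]
    refine (list_prod_ofFn_single_one (staircase n) hm).trans ?_
    rw [if_pos (isChain_ofFn_staircase n)]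
    congr 1 <;> ext
    · simp [staircase]
    · simp only [staircase]
      omega
  · intro σ _ hσ
    convert smul_zero (Equiv.Perm.sign σ : ℤ)
    exact (list_prod_ofFn_single_one (staircase n ∘ σ) hm).trans
      (if_neg (mt eq_one_of_isChain_ofFn_staircase_comp hσ))
  · simp

/-- For a field `K` and `n ≥ 2`, there exist matrices
`b, a_1, …, a_{2(n-1)} ∈ M_n(K)` such that `trace (b · s_{2(n-1)}(a_1, …, a_{2(n-1)})) ≠ 0`. -/
theorem stmt7 {K : Type*} [Field K] (n : ℕ) (hn : 2 ≤ n) :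
    ∃ (b : Matrix (Fin n) (Fin n) K) (a : Fin (2 * (n - 1)) → Matrix (Fin n) (Fin n) K),
      Matrix.trace (b * stdPoly (2 * (n - 1)) a) ≠ 0 := by
  refine ⟨single ⟨n - 1, by omega⟩ ⟨0, by omega⟩ 1,
    fun i => single (staircase n i).1 (staircase n i).2 1, ?_⟩
  rw [stdPoly_single_staircase n hn, single_mul_single_same, mul_one, trace_single_eq_same]
  exact one_ne_zero
end

section
/- Let K be an algebraically closed field and let Γ_1, Γ_2 ∈ M_2(K). Then the unital K-subalgebra of M_2(K) generated by Γ_1 and Γ_2 equals M_2(K) if and only if det(Γ_1Γ_2 − Γ_2Γ_1) ≠ 0. -/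
/-!
By Cayley–Hamilton, `A * A = tr A • A - det A • 1` for every `2 × 2` matrix over a commutative
ring, and polarizing it expresses `B * A` through `1, A, B, A * B`. Hence the span of
`1, A, B, A * B` is stable under left multiplication by `A` and `B`, so it is the algebra they
generate. Four matrices span `M₂(R)` exactly when their `4 × 4` coordinate matrix is invertible,
and the determinant of that coordinate matrix for `1, A, B, A * B` is `det (A * B - B * A)`.
-/

open Module Submodule

theorem Module.Basis.span_eq_top_iff_isUnit_det {R M ι : Type*} [CommRing R] [Nontrivial R]
    [AddCommGroup M] [Module R M] [Fintype ι] [DecidableEq ι] (e : Basis ι R M) {v : ι → M} :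
    span R (Set.range v) = ⊤ ↔ IsUnit (e.det v) := by
  rw [← e.is_basis_iff_det]
  exact ⟨fun h ↦ ⟨linearIndependent_of_top_le_span_of_card_eq_finrank h.ge
    (finrank_eq_card_basis e).symm, h⟩, And.right⟩

namespace Matrix

variable {R : Type*} [CommRing R]

theorem mul_self_fin_two (A : Matrix (Fin 2) (Fin 2) R) :
    A * A = A.trace • A - A.det • 1 := by
  ext i j
  fin_cases i <;> fin_cases j <;>
    simp [mul_apply, trace_fin_two, det_fin_two] <;> ring

theorem mul_add_mul_swap_fin_two (A B : Matrix (Fin 2) (Fin 2) R) :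
    A * B + B * A = A.trace • B + B.trace • A + ((A * B).trace - A.trace * B.trace) • 1 := by
  ext i j
  fin_cases i <;> fin_cases j <;>
    simp [mul_apply, trace_fin_two] <;> ring

def words (A B : Matrix (Fin 2) (Fin 2) R) : Fin 4 → Matrix (Fin 2) (Fin 2) R :=
  ![1, A, B, A * B]

def wordSpan (A B : Matrix (Fin 2) (Fin 2) R) : Submodule R (Matrix (Fin 2) (Fin 2) R) :=
  span R (Set.range (words A B))

section wordSpan

variable {A B : Matrix (Fin 2) (Fin 2) R}

theorem words_mem_wordSpan (i : Fin 4) : words A B i ∈ wordSpan A B :=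
  subset_span ⟨i, rfl⟩

theorem one_mem_wordSpan : 1 ∈ wordSpan A B := words_mem_wordSpan 0
theorem left_mem_wordSpan : A ∈ wordSpan A B := words_mem_wordSpan 1
theorem right_mem_wordSpan : B ∈ wordSpan A B := words_mem_wordSpan 2
theorem mul_mem_wordSpan : A * B ∈ wordSpan A B := words_mem_wordSpan 3

theorem wordSpan_le_iff {S : Submodule R (Matrix (Fin 2) (Fin 2) R)} :
    wordSpan A B ≤ S ↔ 1 ∈ S ∧ A ∈ S ∧ B ∈ S ∧ A * B ∈ S := by
  simp only [wordSpan, span_le, Set.range_subset_iff, Fin.forall_fin_succ, words]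
  simp

theorem left_mul_mem_wordSpan {y : Matrix (Fin 2) (Fin 2) R} (hy : y ∈ wordSpan A B) :
    A * y ∈ wordSpan A B := by
  refine (wordSpan_le_iff (S := (wordSpan A B).comap (LinearMap.mulLeft R A))).2 ?_ hy
  simp only [mem_comap, LinearMap.mulLeft_apply, mul_one, ← mul_assoc, mul_self_fin_two,
    sub_mul, smul_mul_assoc, one_mul]
  exact ⟨left_mem_wordSpan,
    sub_mem (smul_mem _ _ left_mem_wordSpan) (smul_mem _ _ one_mem_wordSpan), mul_mem_wordSpan,
    sub_mem (smul_mem _ _ mul_mem_wordSpan) (smul_mem _ _ right_mem_wordSpan)⟩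

theorem right_mul_mem_wordSpan {y : Matrix (Fin 2) (Fin 2) R} (hy : y ∈ wordSpan A B) :
    B * y ∈ wordSpan A B := by
  refine (wordSpan_le_iff (S := (wordSpan A B).comap (LinearMap.mulLeft R B))).2 ?_ hy
  have hBB : B * B ∈ wordSpan A B := by
    rw [mul_self_fin_two]
    exact sub_mem (smul_mem _ _ right_mem_wordSpan) (smul_mem _ _ one_mem_wordSpan)
  have hBA : B * A ∈ wordSpan A B := by
    rw [← add_sub_cancel_left (A * B) (B * A), mul_add_mul_swap_fin_two]
    exact sub_mem (add_mem (add_mem (smul_mem _ _ right_mem_wordSpan)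
      (smul_mem _ _ left_mem_wordSpan)) (smul_mem _ _ one_mem_wordSpan)) mul_mem_wordSpan
  have hBAB : B * A * B ∈ wordSpan A B := by
    rw [← add_sub_cancel_left (A * B) (B * A), mul_add_mul_swap_fin_two]
    simp only [add_mul, sub_mul, smul_mul_assoc, one_mul, mul_assoc A]
    exact sub_mem (add_mem (add_mem (smul_mem _ _ hBB) (smul_mem _ _ mul_mem_wordSpan))
      (smul_mem _ _ right_mem_wordSpan)) (left_mul_mem_wordSpan hBB)
  simp only [mem_comap, LinearMap.mulLeft_apply, mul_one, ← mul_assoc]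
  exact ⟨right_mem_wordSpan, hBA, hBB, hBAB⟩

theorem toSubmodule_adjoin_eq_wordSpan :
    Subalgebra.toSubmodule (Algebra.adjoin R {A, B}) = wordSpan A B := by
  have hA : A ∈ Algebra.adjoin R {A, B} := Algebra.subset_adjoin (by simp)
  have hB : B ∈ Algebra.adjoin R {A, B} := Algebra.subset_adjoin (by simp)
  refine le_antisymm (fun x hx ↦ ?_)
    (wordSpan_le_iff.2 ⟨Subalgebra.one_mem _, hA, hB, Subalgebra.mul_mem _ hA hB⟩)
  have hmul : ∀ y ∈ wordSpan A B, x * y ∈ wordSpan A B := by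
    induction hx using Algebra.adjoin_induction with
    | mem x hx =>
      rcases hx with rfl | rfl
      exacts [fun y ↦ left_mul_mem_wordSpan, fun y ↦ right_mul_mem_wordSpan]
    | algebraMap r =>
      intro y hy
      rw [Algebra.algebraMap_eq_smul_one, smul_mul_assoc, one_mul]
      exact smul_mem _ _ hy
    | add x x' _ _ hx hx' =>
      intro y hy
      rw [add_mul]
      exact add_mem (hx y hy) (hx' y hy)
    | mul x x' _ _ hx hx' =>
      intro y hy
      rw [mul_assoc]
      exact hx _ (hx' y hy)
  simpa using hmul 1 one_mem_wordSpan

end wordSpan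

theorem toMatrix_words (A B : Matrix (Fin 2) (Fin 2) R) :
    ((stdBasis R (Fin 2) (Fin 2)).reindex finProdFinEquiv).toMatrix (words A B) =
      !![1, A 0 0, B 0 0, (A * B) 0 0;
         0, A 0 1, B 0 1, (A * B) 0 1;
         0, A 1 0, B 1 0, (A * B) 1 0;
         1, A 1 1, B 1 1, (A * B) 1 1] := by
  ext i j
  fin_cases i <;> fin_cases j <;> rfl

theorem det_words (A B : Matrix (Fin 2) (Fin 2) R) :
    ((stdBasis R (Fin 2) (Fin 2)).reindex finProdFinEquiv).det (words A B) =
      (A * B - B * A).det := by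
  rw [Basis.det_apply, toMatrix_words]
  simp [det_succ_row_zero, Fin.sum_univ_succ, Fin.succAbove, mul_apply]
  ring

theorem adjoin_eq_top_iff_isUnit_det_commutator [Nontrivial R] (A B : Matrix (Fin 2) (Fin 2) R) :
    Algebra.adjoin R {A, B} = ⊤ ↔ IsUnit (A * B - B * A).det := by
  rw [← Algebra.toSubmodule_eq_top, toSubmodule_adjoin_eq_wordSpan, wordSpan,
    Basis.span_eq_top_iff_isUnit_det ((stdBasis R (Fin 2) (Fin 2)).reindex finProdFinEquiv),
    det_words]

end Matrix

theorem stmt12_general {K : Type*} [Field K]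
    (Γ₁ Γ₂ : Matrix (Fin 2) (Fin 2) K) :
    Algebra.adjoin K {Γ₁, Γ₂} = ⊤ ↔ (Γ₁ * Γ₂ - Γ₂ * Γ₁).det ≠ 0 :=
  (Matrix.adjoin_eq_top_iff_isUnit_det_commutator Γ₁ Γ₂).trans isUnit_iff_ne_zero

/-- Over an algebraically closed field `K`, two matrices
`Γ_1, Γ_2 ∈ M_2(K)` generate `M_2(K)` as a unital `K`-algebra iff
`det (Γ_1Γ_2 − Γ_2Γ_1) ≠ 0`. -/
theorem stmt12 {K : Type*} [Field K] [IsAlgClosed K]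
    (Γ₁ Γ₂ : Matrix (Fin 2) (Fin 2) K) :
    Algebra.adjoin K {Γ₁, Γ₂} = ⊤ ↔ (Γ₁ * Γ₂ - Γ₂ * Γ₁).det ≠ 0 :=
  stmt12_general Γ₁ Γ₂
end
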